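/- Let Δx > 0 and let u : ℝ → ℝ be a polynomial function of degree at most 3. For y ∈ ℝ define the P² orthonormal-basis coefficients on the cell [y − Δx/2, y + Δx/2]: a₀(y) = (1/Δx)∫ u dx, a₁(y) = (1/Δx)∫ u(x)·2√3·ξ(x) dx, a₂(y) = (1/Δx)∫ u(x)·(6√5·ξ(x)² − √5/2) dx, where ξ(x) = (x−y)/Δx, and set F(y) = a₀(y) + √3·a₁(y) + √5·a₂(y). Then for every y ∈ ℝ: (F(y) − F(y − Δx))/Δx = u'(y) + u'''(y)·Δx²/24. -/

import Mathlib

/-!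
With `φ₀ = 1`, `φ₁ = 2√3ξ`, `φ₂ = 6√5ξ² - √5/2` orthonormal on `[-1/2, 1/2]` and
`φⱼ(1/2) = 1, √3, √5`, the right-boundary value `F(y)` is the cell average of `u` against
the kernel `K(ξ) = ∑ⱼ φⱼ(1/2) φⱼ(ξ) = 30ξ² + 6ξ - 3/2`, whose moments `∫ tᵏ K(t) dt`
over `[-1/2, 1/2]` are `1, 1/2, 1/4, 3/40`. Taylor-expanding the cubic `u` about the cell
centre therefore gives `F = u + u' Δx/2 + u'' Δx²/8 + u''' Δx³/80`, and the backward
difference of this cubic over one cell is `u' Δx + u''' Δx³/24`.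
-/

open Polynomial intervalIntegral

namespace Polynomial

theorem eq_cubic_of_natDegree_le_three {R : Type*} [Semiring R] {p : R[X]}
    (hp : p.natDegree ≤ 3) :
    p = C (p.coeff 0) + C (p.coeff 1) * X + C (p.coeff 2) * X ^ 2 + C (p.coeff 3) * X ^ 3 := by
  conv_lhs => rw [p.as_sum_range' 4 (by omega)]
  simp [Finset.sum_range_succ, ← C_mul_X_pow_eq_monomial]

theorem iteratedDeriv_eval {𝕜 : Type*} [NontriviallyNormedField 𝕜] (p : 𝕜[X]) (n : ℕ) :
    iteratedDeriv n (fun x => p.eval x) = fun x => (derivative^[n] p).eval x := by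
  induction n with
  | zero => simp
  | succ n ih =>
    rw [iteratedDeriv_succ, ih, Function.iterate_succ_apply']
    ext x
    exact Polynomial.deriv _

theorem eval_add_of_natDegree_le_three {K : Type*} [Field K] [CharZero K] {p : K[X]}
    (hp : p.natDegree ≤ 3) (y s : K) :
    p.eval (y + s) = p.eval y + (derivative p).eval y * s + (derivative^[2] p).eval y / 2 * s ^ 2
      + (derivative^[3] p).eval y / 6 * s ^ 3 := by
  rw [eq_cubic_of_natDegree_le_three hp]
  simp only [Function.iterate_succ_apply', Function.iterate_zero_apply, derivative_add,
    derivative_mul, derivative_C, derivative_X, derivative_X_pow, derivative_one, derivative_zero,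
    eval_add, eval_mul, eval_C, eval_X, eval_pow, eval_one, eval_zero]
  ring

end Polynomial

theorem integral_sum_mul_pow {n : ℕ} (a b : ℝ) (c : Fin n → ℝ) :
    ∫ x in a..b, ∑ k, c k * x ^ (k : ℕ)
      = ∑ k, c k * ((b ^ (k + 1 : ℕ) - a ^ (k + 1 : ℕ)) / (k + 1)) := by
  rw [integral_finsetSum fun (k : Fin n) _ =>
    ((continuous_pow (k : ℕ)).const_mul (c k)).intervalIntegrable a b]
  simp [integral_pow]

noncomputable def p2RightKernel (ξ : ℝ) : ℝ := 30 * ξ ^ 2 + 6 * ξ - 3 / 2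

theorem integral_cubic_mul_p2RightKernel (A B C D : ℝ) :
    ∫ t in (-1 / 2 : ℝ)..(1 / 2), (A + B * t + C * t ^ 2 + D * t ^ 3) * p2RightKernel t
      = A + B / 2 + C / 4 + 3 * D / 40 := by
  have hexpand : ∀ t : ℝ, (A + B * t + C * t ^ 2 + D * t ^ 3) * p2RightKernel t = ∑ k : Fin 6,
      ![-3 / 2 * A, 6 * A - 3 / 2 * B, 30 * A + 6 * B - 3 / 2 * C, 30 * B + 6 * C - 3 / 2 * D,
        30 * C + 6 * D, 30 * D] k * t ^ (k : ℕ) := by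
    intro t
    simp only [Fin.sum_univ_six, Matrix.cons_val, Fin.coe_ofNat_eq_mod, Nat.reduceMod,
      p2RightKernel]
    ring
  simp_rw [hexpand, integral_sum_mul_pow]
  simp only [Fin.sum_univ_six, Matrix.cons_val, Fin.coe_ofNat_eq_mod, Nat.reduceMod]
  ring

theorem one_div_mul_integral_cell {h : ℝ} (hh : h ≠ 0) (y : ℝ) (g : ℝ → ℝ) :
    (1 / h) * ∫ x in (y - h / 2)..(y + h / 2), g x
      = ∫ t in (-1 / 2 : ℝ)..(1 / 2), g (y + h * t) := by
  rw [integral_comp_add_mul _ hh, smul_eq_mul, one_div]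
  congr 2 <;> ring

theorem p2_right_value_eq_integral_p2RightKernel {g : ℝ → ℝ} (hg : Continuous g) (h y : ℝ) :
    (1 / h) * (∫ x in (y - h / 2)..(y + h / 2), g x)
      + √3 * ((1 / h) * ∫ x in (y - h / 2)..(y + h / 2), g x * (2 * √3 * ((x - y) / h)))
      + √5 * ((1 / h) * ∫ x in (y - h / 2)..(y + h / 2),
          g x * (6 * √5 * ((x - y) / h) ^ 2 - √5 / 2))
      = (1 / h) * ∫ x in (y - h / 2)..(y + h / 2), g x * p2RightKernel ((x - y) / h) := by
  have hpoint : ∀ x, g x * p2RightKernel ((x - y) / h) = g x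
      + √3 * (g x * (2 * √3 * ((x - y) / h)))
      + √5 * (g x * (6 * √5 * ((x - y) / h) ^ 2 - √5 / 2)) := by
    intro x
    have h3 : √3 * √3 = 3 := Real.mul_self_sqrt (by norm_num)
    have h5 : √5 * √5 = 5 := Real.mul_self_sqrt (by norm_num)
    rw [p2RightKernel]
    linear_combination
      (-(2 * g x * ((x - y) / h))) * h3 - g x * (6 * ((x - y) / h) ^ 2 - 1 / 2) * h5
  have hint : ∀ φ : ℝ → ℝ, Continuous φ →
      IntervalIntegrable (fun x => g x * φ x) MeasureTheory.volume (y - h / 2) (y + h / 2) :=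
    fun φ hφ => (hg.mul hφ).intervalIntegrable _ _
  have hint₁ := (hint _ (by fun_prop :
      Continuous fun x => 2 * √3 * ((x - y) / h))).const_mul √3
  have hint₂ := (hint _ (by fun_prop :
      Continuous fun x => 6 * √5 * ((x - y) / h) ^ 2 - √5 / 2)).const_mul √5
  simp_rw [hpoint]
  rw [integral_add ((hg.intervalIntegrable _ _).add hint₁) hint₂,
    integral_add (hg.intervalIntegrable _ _) hint₁, integral_const_mul, integral_const_mul]
  ring

theorem p2_right_value_of_natDegree_le_three {p : ℝ[X]} (hp : p.natDegree ≤ 3) {h : ℝ}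
    (hh : h ≠ 0) (y : ℝ) :
    (1 / h) * ∫ x in (y - h / 2)..(y + h / 2), p.eval x * p2RightKernel ((x - y) / h)
      = p.eval y + (derivative p).eval y * h / 2 + (derivative^[2] p).eval y * h ^ 2 / 8
        + (derivative^[3] p).eval y * h ^ 3 / 80 := by
  have htaylor : ∀ t, p.eval (y + h * t) * p2RightKernel ((y + h * t - y) / h) =
      (p.eval y + (derivative p).eval y * h * t + (derivative^[2] p).eval y / 2 * h ^ 2 * t ^ 2
        + (derivative^[3] p).eval y / 6 * h ^ 3 * t ^ 3) * p2RightKernel t := by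
    intro t
    rw [eval_add_of_natDegree_le_three hp, add_sub_cancel_left, mul_div_cancel_left₀ _ hh]
    ring
  rw [one_div_mul_integral_cell hh]
  simp_rw [htaylor, integral_cubic_mul_p2RightKernel]
  ring

/-- The upwind flux difference driving the cell-average update of the third-order DG
scheme equals `u'(y) + u'''(y)·Δx²/24` for cubic `u`. -/
theorem dg_p2_upwind_flux_difference (Δx : ℝ) (hΔx : 0 < Δx)
    (u : ℝ → ℝ) (p : Polynomial ℝ) (hp : p.natDegree ≤ 3)
    (hu : ∀ x, u x = p.eval x)
    (a₀ a₁ a₂ F : ℝ → ℝ)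
    (ha₀ : ∀ y, a₀ y = (1 / Δx) * ∫ x in (y - Δx / 2)..(y + Δx / 2), u x)
    (ha₁ : ∀ y, a₁ y = (1 / Δx) * ∫ x in (y - Δx / 2)..(y + Δx / 2),
      u x * (2 * Real.sqrt 3 * ((x - y) / Δx)))
    (ha₂ : ∀ y, a₂ y = (1 / Δx) * ∫ x in (y - Δx / 2)..(y + Δx / 2),
      u x * (6 * Real.sqrt 5 * ((x - y) / Δx) ^ 2 - Real.sqrt 5 / 2))
    (hF : ∀ y, F y = a₀ y + Real.sqrt 3 * a₁ y + Real.sqrt 5 * a₂ y) :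
    ∀ y : ℝ, (F y - F (y - Δx)) / Δx
      = deriv u y + iteratedDeriv 3 u y * Δx ^ 2 / 24 := by
  obtain rfl : u = fun x => p.eval x := funext hu
  have hflux : ∀ z, F z = p.eval z + (derivative p).eval z * Δx / 2
      + (derivative^[2] p).eval z * Δx ^ 2 / 8 + (derivative^[3] p).eval z * Δx ^ 3 / 80 := by
    intro z
    rw [hF, ha₀, ha₁, ha₂, p2_right_value_eq_integral_p2RightKernel p.continuous,
      p2_right_value_of_natDegree_le_three hp hΔx.ne']
  intro y
  rw [hflux, hflux, Polynomial.deriv, iteratedDeriv_eval, eq_cubic_of_natDegree_le_three hp]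
  simp only [Function.iterate_succ_apply', Function.iterate_zero_apply, derivative_add,
    derivative_mul, derivative_C, derivative_X, derivative_X_pow, derivative_one, derivative_zero,
    eval_add, eval_mul, eval_C, eval_X, eval_pow, eval_one, eval_zero]
  field_simp
  ring
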